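/- arXiv:1910.14635 — 3 statements merged into one kernel-verified Lean document; each statement's English description precedes it below -/
import Mathlib

section
/- In a step-two Carnot group, the set where the horizontal gradient of N vanishes, the set where the horizontal Hessian of N vanishes, and the set {x : x_h = 0} all coincide. -/
open Matrix

lemma skew_quad {m : ℕ} (A : Matrix (Fin m) (Fin m) ℝ) (hA : Aᵀ = -A)
    (v : Fin m → ℝ) : v ⬝ᵥ (A *ᵥ v) = 0 := by
  have h1 : v ⬝ᵥ (A *ᵥ v) = v ᵥ* A ⬝ᵥ v := dotProduct_mulVec v A v
  have h2 : v ᵥ* A = -(A *ᵥ v) := by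
    have hA' : A = -Aᵀ := by rw [hA, neg_neg]
    nth_rewrite 1 [hA']
    rw [vecMul_neg, vecMul_transpose]
  rw [h2, neg_dotProduct, dotProduct_comm (A *ᵥ v) v] at h1
  linarith [h1]

lemma grad_sum {m k : ℕ} (B : Fin k → Matrix (Fin m) (Fin m) ℝ)
    (hB : ∀ i, (B i)ᵀ = -(B i)) (x : (Fin m → ℝ) × (Fin k → ℝ)) :
    ∑ j, x.1 j * (4 * (x.1 ⬝ᵥ x.1) * x.1 j + 2 * ∑ i, x.2 i * (B i *ᵥ x.1) j)
      = 4 * (x.1 ⬝ᵥ x.1) * (x.1 ⬝ᵥ x.1) := by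
  have h1 : ∀ j, x.1 j * (4 * (x.1 ⬝ᵥ x.1) * x.1 j + 2 * ∑ i, x.2 i * (B i *ᵥ x.1) j)
      = 4 * (x.1 ⬝ᵥ x.1) * (x.1 j * x.1 j) + ∑ i, (2 * x.2 i) * (x.1 j * (B i *ᵥ x.1) j) := by
    intro j
    rw [mul_add, Finset.mul_sum, Finset.mul_sum]
    congr 1
    · ring
    · exact Finset.sum_congr rfl fun i _ => by ring
  rw [Finset.sum_congr rfl fun j _ => h1 j, Finset.sum_add_distrib, Finset.sum_comm,
    ← Finset.mul_sum]
  have h2 : ∀ i : Fin k, ∑ j, (2 * x.2 i) * (x.1 j * (B i *ᵥ x.1) j) = 0 := by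
    intro i
    rw [← Finset.mul_sum]
    have := skew_quad (B i) (hB i) x.1
    rw [dotProduct] at this
    rw [this, mul_zero]
  rw [Finset.sum_congr rfl fun i _ => h2 i]
  simp [dotProduct]

lemma vecMulVec_mulVec' {m : ℕ} (u v w : Fin m → ℝ) :
    vecMulVec u v *ᵥ w = (v ⬝ᵥ w) • u := by
  ext j
  simp only [mulVec, vecMulVec_apply, dotProduct, Pi.smul_apply, smul_eq_mul, Finset.mul_sum]
  rw [Finset.sum_mul]
  exact Finset.sum_congr rfl fun i _ => by ring

lemma sum_vecMulVec_mulVec {m k : ℕ} (w : Fin k → Fin m → ℝ) (v : Fin m → ℝ) :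
    (∑ l, vecMulVec (w l) (w l)) *ᵥ v = ∑ l, (w l ⬝ᵥ v) • w l := by
  ext j
  simp only [mulVec, dotProduct, Matrix.sum_apply, vecMulVec_apply, Finset.sum_mul,
    Finset.sum_apply, Pi.smul_apply, smul_eq_mul]
  rw [Finset.sum_comm]
  refine Finset.sum_congr rfl fun l _ => ?_
  exact Finset.sum_congr rfl fun i _ => by ring

lemma grad_iff {m k : ℕ} (B : Fin k → Matrix (Fin m) (Fin m) ℝ)
    (hB : ∀ i, (B i)ᵀ = -(B i)) (x : (Fin m → ℝ) × (Fin k → ℝ)) :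
    (fun j => 4 * (x.1 ⬝ᵥ x.1) * x.1 j + 2 * ∑ i, x.2 i * (B i *ᵥ x.1) j) = (0 : Fin m → ℝ)
      ↔ x.1 = 0 := by
  constructor
  · intro h
    have hsum : ∑ j, x.1 j * (4 * (x.1 ⬝ᵥ x.1) * x.1 j + 2 * ∑ i, x.2 i * (B i *ᵥ x.1) j) = 0 := by
      refine Finset.sum_eq_zero fun j _ => ?_
      rw [congrFun h j]
      simp
    rw [grad_sum B hB x] at hsum
    have hd : x.1 ⬝ᵥ x.1 = 0 := by nlinarith [hsum]
    exact dotProduct_self_eq_zero.mp hd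
  · intro h
    funext j
    simp [h]

lemma hess_iff {m k : ℕ} (B : Fin k → Matrix (Fin m) (Fin m) ℝ)
    (hB : ∀ i, (B i)ᵀ = -(B i)) (x : (Fin m → ℝ) × (Fin k → ℝ)) :
    (4 * (x.1 ⬝ᵥ x.1)) • (1 : Matrix (Fin m) (Fin m) ℝ) +
        (8 : ℝ) • vecMulVec x.1 x.1 +
        (2 : ℝ) • ∑ l, vecMulVec (B l *ᵥ x.1) (B l *ᵥ x.1) = 0
      ↔ x.1 = 0 := by
  constructor
  · intro h
    set M := (4 * (x.1 ⬝ᵥ x.1)) • (1 : Matrix (Fin m) (Fin m) ℝ) +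
        (8 : ℝ) • vecMulVec x.1 x.1 +
        (2 : ℝ) • ∑ l, vecMulVec (B l *ᵥ x.1) (B l *ᵥ x.1) with hM
    have hq : x.1 ⬝ᵥ (M *ᵥ x.1) = 0 := by rw [h]; simp
    have hw : ∀ l : Fin k, (B l *ᵥ x.1) ⬝ᵥ x.1 = 0 := by
      intro l
      rw [dotProduct_comm]
      exact skew_quad (B l) (hB l) x.1
    have hMv : M *ᵥ x.1 = (12 * (x.1 ⬝ᵥ x.1)) • x.1 := by
      rw [hM, add_mulVec, add_mulVec, smul_mulVec, one_mulVec,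
        smul_mulVec, vecMulVec_mulVec', smul_mulVec]
      have hsum : (∑ l, vecMulVec (B l *ᵥ x.1) (B l *ᵥ x.1)) *ᵥ x.1 = 0 := by
        rw [sum_vecMulVec_mulVec]
        exact Finset.sum_eq_zero fun l _ => by rw [hw l, zero_smul]
      rw [hsum, smul_zero, add_zero, smul_smul, ← add_smul]
      ring_nf
    rw [hMv, dotProduct_smul, smul_eq_mul] at hq
    have hd : x.1 ⬝ᵥ x.1 = 0 := by nlinarith [hq]
    exact dotProduct_self_eq_zero.mp hd
  · intro h
    have h0 : vecMulVec (0 : Fin m → ℝ) (0 : Fin m → ℝ) = 0 := by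
      ext i j; simp [vecMulVec]
    simp [h, h0]

/-- In a step-two Carnot group, with `N(x) = |x_h|⁴ + |x_v|²`, the set where the horizontal
gradient `XN(x) = 4|x_h|² x_h + 2 Σ_k (x_v)_k B^{(k)} x_h` vanishes, the set where the
horizontal Hessian `X²N(x) = 4|x_h|² I + 8 x_h ⊗ x_h + 2 Σ_k (B^{(k)}x_h) ⊗ (B^{(k)}x_h)`
vanishes, and the set `{x : x_h = 0}` all coincide. -/
theorem zero_sets_of_horizontal_gradient_and_hessian_coincide
    (m k : ℕ) (B : Fin k → Matrix (Fin m) (Fin m) ℝ)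
    (hB : ∀ i, (B i)ᵀ = -(B i)) :
    letI XN : (Fin m → ℝ) × (Fin k → ℝ) → (Fin m → ℝ) :=
      fun x j => 4 * (x.1 ⬝ᵥ x.1) * x.1 j + 2 * ∑ i, x.2 i * (B i *ᵥ x.1) j
    letI X2N : (Fin m → ℝ) × (Fin k → ℝ) → Matrix (Fin m) (Fin m) ℝ :=
      fun x => (4 * (x.1 ⬝ᵥ x.1)) • (1 : Matrix (Fin m) (Fin m) ℝ) +
        (8 : ℝ) • vecMulVec x.1 x.1 +
        (2 : ℝ) • ∑ l, vecMulVec (B l *ᵥ x.1) (B l *ᵥ x.1)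
    {x : (Fin m → ℝ) × (Fin k → ℝ) | XN x = 0} =
        {x : (Fin m → ℝ) × (Fin k → ℝ) | X2N x = 0} ∧
      {x : (Fin m → ℝ) × (Fin k → ℝ) | XN x = 0} =
        {x : (Fin m → ℝ) × (Fin k → ℝ) | x.1 = 0} := by
  constructor
  · ext x
    simp only [Set.mem_setOf_eq]
    rw [grad_iff B hB x, hess_iff B hB x]
  · ext x
    simp only [Set.mem_setOf_eq]
    exact grad_iff B hB x
end

section
/- In the step-two Carnot group, |X_x d_G^4(x,y)| = |X_y d_G^4(x,y)| and X_x^2 d_G^4(x,y) = X_y^2 d_G^4(x,y) for all x, y, and each of these quantities vanishes exactly on the set {(x,y) : x_h = y_h}. -/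
/-!
Left translations `z ↦ a ∘ z` are affine and their differential carries `X_j(z)` to `X_j(a ∘ z)`,
so horizontal derivatives commute with them. Inversion is `z ↦ -z` and `y⁻¹ ∘ x = (x⁻¹ ∘ y)⁻¹`, so
writing `N(x⁻¹ ∘ y) = N(y⁻¹ ∘ x)` and `w = x⁻¹ ∘ y = (h, v)`, the `y`-derivatives are those of `N`
at `w` and the `x`-derivatives those of `N` at `-w`. With `F(h)_{jl} = (B⁽ˡ⁾h)_j` one finds
`XN(w) = 4|h|²h + 2F(h)v` and `sym X²N(w) = 8hhᵀ + 4|h|²I + 2F(h)F(h)ᵀ`: skew-symmetry of the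
`B⁽ˡ⁾` gives `hᵀF(h) = 0` and kills the antisymmetric part of `X_iX_jN`. Hence the two summands
of `XN` are orthogonal and only the first changes sign with `w`, the Hessian is even in `h`, and
pairing with `h` gives `4|h|⁴` and `12|h|⁴`, which vanish exactly when `x_h = y_h`.
-/

open Matrix

section DotProduct

variable {𝕜 X ι : Type*} [NontriviallyNormedField 𝕜] [NormedAddCommGroup X] [NormedSpace 𝕜 X]
  [Fintype ι]

noncomputable def dotProductCLM (a : ι → 𝕜) : (ι → 𝕜) →L[𝕜] 𝕜 :=
  ∑ i, a i • ContinuousLinearMap.proj i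

@[simp]
theorem dotProductCLM_apply (a v : ι → 𝕜) : dotProductCLM a v = a ⬝ᵥ v := by
  simp [dotProductCLM, dotProduct]

theorem HasFDerivAt.dotProduct {f g : X → ι → 𝕜} {f' g' : X →L[𝕜] ι → 𝕜} {x : X}
    (hf : HasFDerivAt f f' x) (hg : HasFDerivAt g g' x) :
    HasFDerivAt (fun y => f y ⬝ᵥ g y)
      ((dotProductCLM (f x)).comp g' + (dotProductCLM (g x)).comp f') x := by
  have h := HasFDerivAt.fun_sum (u := Finset.univ) fun i _ =>
    ((hasFDerivAt_apply i (f x)).comp x hf).mul ((hasFDerivAt_apply i (g x)).comp x hg)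
  refine h.congr_fderiv ?_
  ext u
  simp only [_root_.sum_apply, _root_.add_apply, _root_.smul_apply, ContinuousLinearMap.comp_apply,
    ContinuousLinearMap.proj_apply, dotProductCLM_apply, smul_eq_mul, Finset.sum_add_distrib,
    Function.comp_apply]
  rfl

end DotProduct

section SkewMatrix

variable {R n : Type*} [CommRing R] [Fintype n] {A : Matrix n n R}

theorem mulVec_dotProduct_swap_of_transpose_eq_neg (hA : Aᵀ = -A) (u v : n → R) :
    (A *ᵥ u) ⬝ᵥ v = -((A *ᵥ v) ⬝ᵥ u) := by
  rw [dotProduct_comm, dotProduct_mulVec, ← mulVec_transpose, hA, neg_mulVec, neg_dotProduct]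

theorem dotProduct_mulVec_self_of_transpose_eq_neg [IsAddTorsionFree R] (hA : Aᵀ = -A)
    (v : n → R) : v ⬝ᵥ (A *ᵥ v) = 0 := by
  rw [dotProduct_comm]
  exact self_eq_neg.mp (mulVec_dotProduct_swap_of_transpose_eq_neg hA v v)

end SkewMatrix

namespace StepTwoCarnot

noncomputable section

variable {m k : ℕ} (B : Fin k → Matrix (Fin m) (Fin m) ℝ)

local notation "𝔾" => (Fin m → ℝ) × (Fin k → ℝ)

def mul (a b : 𝔾) : 𝔾 :=
  (a.1 + b.1, a.2 + b.2 + fun l => (B l *ᵥ a.1) ⬝ᵥ b.1)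

def quarticGauge (z : 𝔾) : ℝ :=
  (z.1 ⬝ᵥ z.1) ^ 2 + z.2 ⬝ᵥ z.2

def frame (h : Fin m → ℝ) : Matrix (Fin m) (Fin k) ℝ :=
  of fun j l => (B l *ᵥ h) j

def horizontal (z : 𝔾) (j : Fin m) : 𝔾 :=
  (Pi.single j 1, frame B z.1 j)

def horizontalGrad (f : 𝔾 → ℝ) (z : 𝔾) : Fin m → ℝ :=
  fun j => fderiv ℝ f z (horizontal B z j)

def horizontalHessian (f : 𝔾 → ℝ) (z : 𝔾) : Matrix (Fin m) (Fin m) ℝ :=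
  of fun i j => (horizontalGrad B (fun z => horizontalGrad B f z j) z i +
    horizontalGrad B (fun z => horizontalGrad B f z i) z j) / 2

theorem frame_neg (h : Fin m → ℝ) : frame B (-h) = -frame B h := by
  ext j l
  simp [frame, mulVec_neg]

theorem frame_zero : frame B (0 : Fin m → ℝ) = 0 := by
  ext j l
  simp [frame]

theorem vecMul_frame_self (hB : ∀ l, (B l)ᵀ = -B l) (h : Fin m → ℝ) : h ᵥ* frame B h = 0 := by
  ext l
  exact dotProduct_mulVec_self_of_transpose_eq_neg (hB l) h

def mulLeftDeriv (a : 𝔾) : 𝔾 →L[ℝ] 𝔾 :=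
  (ContinuousLinearMap.fst ℝ _ _).prod (ContinuousLinearMap.snd ℝ _ _ +
    ContinuousLinearMap.pi fun l => (dotProductCLM (B l *ᵥ a.1)).comp (.fst ℝ _ _))

theorem hasFDerivAt_mul_left (a z : 𝔾) : HasFDerivAt (mul B a) (mulLeftDeriv B a) z := by
  have h : mul B a = fun z => a + mulLeftDeriv B a z := by
    ext z : 1
    simp only [mul, add_assoc, mulLeftDeriv, ContinuousLinearMap.prod_apply,
      ContinuousLinearMap.coe_fst', _root_.add_apply, ContinuousLinearMap.coe_snd',
      ContinuousLinearMap.coe_pi', ContinuousLinearMap.comp_apply, dotProductCLM_apply]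
    rfl
  rw [h]
  exact (mulLeftDeriv B a).hasFDerivAt.const_add a

theorem mulLeftDeriv_horizontal (a z : 𝔾) (j : Fin m) :
    mulLeftDeriv B a (horizontal B z j) = horizontal B (mul B a z) j := by
  ext l
  · rfl
  · simp [mulLeftDeriv, horizontal, mul, frame, mulVec_add, add_comm]

theorem horizontalGrad_comp_mul_left {f : 𝔾 → ℝ} (a z : 𝔾) (hf : DifferentiableAt ℝ f (mul B a z)) :
    horizontalGrad B (fun z => f (mul B a z)) z = horizontalGrad B f (mul B a z) := by
  ext j
  rw [horizontalGrad, fderiv_fun_comp z hf (hasFDerivAt_mul_left B a z).differentiableAt,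
    (hasFDerivAt_mul_left B a z).fderiv, ContinuousLinearMap.comp_apply, mulLeftDeriv_horizontal]
  rfl

theorem horizontalHessian_comp_mul_left {f : 𝔾 → ℝ}
    (hf : Differentiable ℝ f) (hgrad : ∀ j, Differentiable ℝ fun z => horizontalGrad B f z j)
    (a z : 𝔾) :
    horizontalHessian B (fun z => f (mul B a z)) z = horizontalHessian B f (mul B a z) := by
  have grad_comp : ∀ j, (fun z => horizontalGrad B (fun z => f (mul B a z)) z j) =
      fun z => horizontalGrad B f (mul B a z) j := fun j =>
    funext fun z => by rw [horizontalGrad_comp_mul_left B a z (hf _)]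
  ext i j
  simp only [horizontalHessian, of_apply, grad_comp,
    horizontalGrad_comp_mul_left B a z (hgrad _ _)]

theorem neg_mul_swap (hB : ∀ l, (B l)ᵀ = -B l) (a b : 𝔾) : mul B (-a) b = -mul B (-b) a := by
  refine Prod.ext (by simp [mul, add_comm]) (funext fun l => ?_)
  simp only [mul, Prod.fst_neg, Prod.snd_neg, Prod.snd_neg, Pi.add_apply, Pi.neg_apply, mulVec_neg,
    neg_dotProduct, mulVec_dotProduct_swap_of_transpose_eq_neg (hB l) a.1 b.1]
  ring

theorem quarticGauge_neg (z : 𝔾) : quarticGauge (-z) = quarticGauge z := by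
  simp [quarticGauge]

theorem hasFDerivAt_quarticGauge (w : 𝔾) :
    HasFDerivAt quarticGauge ((4 * (w.1 ⬝ᵥ w.1)) • (dotProductCLM w.1).comp (.fst ℝ _ _) +
      (2 : ℝ) • (dotProductCLM w.2).comp (.snd ℝ _ _)) w := by
  have h := (((hasFDerivAt_fst (p := w)).dotProduct hasFDerivAt_fst).pow 2).fun_add
    ((hasFDerivAt_snd (p := w)).dotProduct hasFDerivAt_snd)
  refine h.congr_fderiv (ContinuousLinearMap.ext fun u => ?_)
  simp only [Nat.add_one_sub_one, pow_one, nsmul_eq_mul, Nat.cast_ofNat, smul_add, _root_.add_apply,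
    _root_.smul_apply, ContinuousLinearMap.comp_apply, ContinuousLinearMap.coe_fst',
    dotProductCLM_apply, smul_eq_mul, ContinuousLinearMap.coe_snd']
  ring

theorem differentiable_quarticGauge : Differentiable ℝ (quarticGauge (m := m) (k := k)) :=
  fun w => (hasFDerivAt_quarticGauge w).differentiableAt

theorem horizontalGrad_quarticGauge (w : 𝔾) :
    horizontalGrad B quarticGauge w =
      (4 * (w.1 ⬝ᵥ w.1)) • w.1 + (2 : ℝ) • (frame B w.1 *ᵥ w.2) := by
  ext j
  simp [horizontalGrad, (hasFDerivAt_quarticGauge w).fderiv, horizontal, mulVec,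
    dotProduct_comm w.2]

theorem hasFDerivAt_horizontalGrad_quarticGauge (j : Fin m) (w : 𝔾) :
    ∃ L : 𝔾 →L[ℝ] ℝ,
      HasFDerivAt (fun z => horizontalGrad B quarticGauge z j) L w ∧
      ∀ u, L u = 8 * (w.1 ⬝ᵥ u.1) * w.1 j + 4 * (w.1 ⬝ᵥ w.1) * u.1 j +
        2 * ((fun l => B l j ⬝ᵥ u.1) ⬝ᵥ w.2 + frame B w.1 j ⬝ᵥ u.2) := by
  have hrow : HasFDerivAt (fun z : 𝔾 => frame B z.1 j) _ w :=
    hasFDerivAt_pi.2 fun l => (hasFDerivAt_const (B l j) w).dotProduct hasFDerivAt_fst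
  have h := (((hasFDerivAt_fst.dotProduct hasFDerivAt_fst).const_mul 4).fun_mul
    ((hasFDerivAt_apply j w.1).comp w hasFDerivAt_fst)).fun_add
      ((hrow.dotProduct hasFDerivAt_snd).const_mul 2)
  have hF : (fun z => horizontalGrad B quarticGauge z j) =
      fun z => 4 * (z.1 ⬝ᵥ z.1) * z.1 j + 2 * (frame B z.1 j ⬝ᵥ z.2) := by
    ext z
    simp [horizontalGrad_quarticGauge, mulVec]
  rw [hF]
  refine ⟨_, h, fun u => ?_⟩
  simp only [Function.comp_apply, smul_add, ContinuousLinearMap.comp_zero, add_zero,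
    _root_.add_apply, _root_.smul_apply, ContinuousLinearMap.comp_apply,
    ContinuousLinearMap.coe_fst', ContinuousLinearMap.proj_apply, smul_eq_mul, dotProductCLM_apply,
    ContinuousLinearMap.coe_snd', ContinuousLinearMap.coe_pi']
  rw [dotProduct_comm w.2]
  ring

theorem differentiable_horizontalGrad_quarticGauge (j : Fin m) :
    Differentiable ℝ fun z => horizontalGrad B quarticGauge z j := fun w =>
  let ⟨_, hL, _⟩ := hasFDerivAt_horizontalGrad_quarticGauge B j w
  hL.differentiableAt

def quarticGaugeHessian (h : Fin m → ℝ) : Matrix (Fin m) (Fin m) ℝ :=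
  (8 : ℝ) • vecMulVec h h + (4 * (h ⬝ᵥ h)) • 1 + (2 : ℝ) • (frame B h * (frame B h)ᵀ)

theorem horizontalHessian_quarticGauge (hB : ∀ l, (B l)ᵀ = -B l) (w : 𝔾) :
    horizontalHessian B quarticGauge w = quarticGaugeHessian B w.1 := by
  have second : ∀ i j, horizontalGrad B (fun z => horizontalGrad B quarticGauge z j) w i =
      8 * w.1 i * w.1 j + 4 * (w.1 ⬝ᵥ w.1) * (1 : Matrix (Fin m) (Fin m) ℝ) i j +
        2 * ((fun l => B l j i) ⬝ᵥ w.2 + frame B w.1 i ⬝ᵥ frame B w.1 j) := by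
    intro i j
    obtain ⟨L, hL, hLu⟩ := hasFDerivAt_horizontalGrad_quarticGauge B j w
    rw [horizontalGrad, hL.fderiv, hLu]
    simp [horizontal, one_apply, Pi.single_apply, dotProduct_comm (frame B w.1 j), eq_comm]
  have skew : ∀ i j, (fun l => B l j i) ⬝ᵥ w.2 = -((fun l => B l i j) ⬝ᵥ w.2) := by
    intro i j
    rw [← neg_dotProduct]
    congr 1
    ext l
    simpa using congr_fun (congr_fun (hB l) i) j
  ext i j
  have one_symm : (1 : Matrix (Fin m) (Fin m) ℝ) j i = (1 : Matrix (Fin m) (Fin m) ℝ) i j := by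
    rw [← transpose_apply (1 : Matrix (Fin m) (Fin m) ℝ), transpose_one]
  simp only [horizontalHessian, of_apply, second, quarticGaugeHessian, Matrix.add_apply,
    Matrix.smul_apply, vecMulVec_apply, mul_apply', transpose_apply, skew i j, one_symm,
    dotProduct_comm (frame B w.1 j), smul_eq_mul]
  ring

theorem quarticGaugeHessian_neg (h : Fin m → ℝ) :
    quarticGaugeHessian B (-h) = quarticGaugeHessian B h := by
  simp [quarticGaugeHessian, frame_neg]

theorem dotProduct_quarticGaugeHessian_mulVec_self (hB : ∀ l, (B l)ᵀ = -B l) (h : Fin m → ℝ) :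
    h ⬝ᵥ (quarticGaugeHessian B h *ᵥ h) = 12 * (h ⬝ᵥ h) ^ 2 := by
  simp only [quarticGaugeHessian, add_mulVec, smul_mulVec, vecMulVec_mulVec, op_smul_eq_smul,
    one_mulVec, ← mulVec_mulVec, mulVec_transpose, vecMul_frame_self B hB, mulVec_zero, smul_zero,
    add_zero, dotProduct_add, dotProduct_smul, smul_eq_mul]
  ring

theorem quarticGaugeHessian_eq_zero_iff (hB : ∀ l, (B l)ᵀ = -B l) {h : Fin m → ℝ} :
    quarticGaugeHessian B h = 0 ↔ h = 0 := by
  refine ⟨fun hH => ?_, fun hh => by simp [hh, quarticGaugeHessian, frame_zero]⟩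
  have h12 := dotProduct_quarticGaugeHessian_mulVec_self B hB h
  rw [hH, zero_mulVec, dotProduct_zero, zero_eq_mul, pow_eq_zero_iff two_ne_zero] at h12
  exact dotProduct_self_eq_zero.mp (h12.resolve_left (by norm_num))

theorem dotProduct_horizontalGrad_quarticGauge (hB : ∀ l, (B l)ᵀ = -B l) (w : 𝔾) :
    w.1 ⬝ᵥ horizontalGrad B quarticGauge w = 4 * (w.1 ⬝ᵥ w.1) ^ 2 := by
  rw [horizontalGrad_quarticGauge, dotProduct_add, dotProduct_smul, dotProduct_smul,
    dotProduct_mulVec, vecMul_frame_self B hB, zero_dotProduct, smul_zero, add_zero, smul_eq_mul]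
  ring

theorem horizontalGrad_quarticGauge_eq_zero_iff (hB : ∀ l, (B l)ᵀ = -B l) {w : 𝔾} :
    horizontalGrad B quarticGauge w = 0 ↔ w.1 = 0 := by
  refine ⟨fun hG => ?_, fun hw => by simp [horizontalGrad_quarticGauge, hw, frame_zero]⟩
  have h4 := dotProduct_horizontalGrad_quarticGauge B hB w
  rw [hG, dotProduct_zero, zero_eq_mul, pow_eq_zero_iff two_ne_zero] at h4
  exact dotProduct_self_eq_zero.mp (h4.resolve_left (by norm_num))

theorem dotProduct_self_horizontalGrad_quarticGauge_neg (hB : ∀ l, (B l)ᵀ = -B l) (w : 𝔾) :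
    horizontalGrad B quarticGauge (-w) ⬝ᵥ horizontalGrad B quarticGauge (-w) =
      horizontalGrad B quarticGauge w ⬝ᵥ horizontalGrad B quarticGauge w := by
  set a := (4 * (w.1 ⬝ᵥ w.1)) • w.1
  set b := (2 : ℝ) • (frame B w.1 *ᵥ w.2)
  have hneg : horizontalGrad B quarticGauge (-w) = -a + b := by
    simp [horizontalGrad_quarticGauge, a, b, frame_neg, neg_mulVec_neg]
  have hab : a ⬝ᵥ b = 0 := by
    rw [smul_dotProduct, dotProduct_smul, dotProduct_mulVec, vecMul_frame_self B hB,
      zero_dotProduct, smul_zero, smul_zero]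
  rw [hneg, show horizontalGrad B quarticGauge w = a + b from horizontalGrad_quarticGauge B w]
  simp only [add_dotProduct, dotProduct_add, neg_dotProduct, dotProduct_neg, dotProduct_comm b a,
    hab]
  ring

theorem quarticGauge_neg_mul_comm (hB : ∀ l, (B l)ᵀ = -B l) (x y : 𝔾) :
    quarticGauge (mul B (-x) y) = quarticGauge (mul B (-y) x) := by
  rw [neg_mul_swap B hB, quarticGauge_neg]

theorem horizontalGrad_quarticGauge_neg_mul_in_fst (hB : ∀ l, (B l)ᵀ = -B l) (x y : 𝔾) :
    horizontalGrad B (fun x' => quarticGauge (mul B (-x') y)) x =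
      horizontalGrad B quarticGauge (-mul B (-x) y) := by
  simp only [quarticGauge_neg_mul_comm B hB _ y]
  rw [horizontalGrad_comp_mul_left B _ _ (differentiable_quarticGauge _), neg_mul_swap B hB]

theorem horizontalHessian_quarticGauge_neg_mul_in_snd (hB : ∀ l, (B l)ᵀ = -B l) (x y : 𝔾) :
    horizontalHessian B (fun y' => quarticGauge (mul B (-x) y')) y =
      quarticGaugeHessian B (mul B (-x) y).1 := by
  rw [horizontalHessian_comp_mul_left B differentiable_quarticGauge
    (differentiable_horizontalGrad_quarticGauge B), horizontalHessian_quarticGauge B hB]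

theorem horizontalHessian_quarticGauge_neg_mul_in_fst (hB : ∀ l, (B l)ᵀ = -B l) (x y : 𝔾) :
    horizontalHessian B (fun x' => quarticGauge (mul B (-x') y)) x =
      quarticGaugeHessian B (mul B (-x) y).1 := by
  simp only [quarticGauge_neg_mul_comm B hB _ y]
  rw [horizontalHessian_quarticGauge_neg_mul_in_snd B hB, neg_mul_swap B hB, Prod.fst_neg,
    quarticGaugeHessian_neg]

theorem neg_mul_fst_eq_zero_iff {x y : 𝔾} : (mul B (-x) y).1 = 0 ↔ x.1 = y.1 := by
  simp [mul, neg_add_eq_zero]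

end

end StepTwoCarnot

/-- In a step-two Carnot group, with `d_G⁴(x,y) = N(x⁻¹ ∘ y)`, one has
`|X_x d_G⁴(x,y)| = |X_y d_G⁴(x,y)|` and `X²_x d_G⁴(x,y) = X²_y d_G⁴(x,y)` for all `x, y`,
and each of these quantities vanishes exactly on the set `{(x,y) : x_h = y_h}`.
The horizontal derivatives are taken along the generators
`X_j = ∂_{x_j} + Σ_l (B^{(l)} x_h)_j ∂_{v_l}`. -/
theorem horizontal_derivatives_in_x_and_y_of_distance_fourth_power
    (m k : ℕ) (B : Fin k → Matrix (Fin m) (Fin m) ℝ)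
    (hB : ∀ i, (B i)ᵀ = -(B i)) :
    letI E := (Fin m → ℝ) × (Fin k → ℝ)
    letI op : E → E → E :=
      fun a b => (a.1 + b.1, a.2 + b.2 + fun l => (B l *ᵥ a.1) ⬝ᵥ b.1)
    letI N : E → ℝ := fun z => (z.1 ⬝ᵥ z.1) ^ 2 + z.2 ⬝ᵥ z.2
    letI dir : E → Fin m → E :=
      fun y j => (Pi.single j 1, fun l => (B l *ᵥ y.1) j)
    letI Xx : E → E → Fin m → ℝ :=
      fun x y j => fderiv ℝ (fun x' => N (op (-x') y)) x (dir x j)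
    letI Xy : E → E → Fin m → ℝ :=
      fun x y j => fderiv ℝ (fun y' => N (op (-x) y')) y (dir y j)
    letI X2x : E → E → Matrix (Fin m) (Fin m) ℝ := fun x y => Matrix.of fun i j =>
      (fderiv ℝ (fun z => fderiv ℝ (fun x' => N (op (-x') y)) z (dir z j)) x (dir x i) +
        fderiv ℝ (fun z => fderiv ℝ (fun x' => N (op (-x') y)) z (dir z i)) x (dir x j)) / 2
    letI X2y : E → E → Matrix (Fin m) (Fin m) ℝ := fun x y => Matrix.of fun i j =>
      (fderiv ℝ (fun z => fderiv ℝ (fun y' => N (op (-x) y')) z (dir z j)) y (dir y i) +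
        fderiv ℝ (fun z => fderiv ℝ (fun y' => N (op (-x) y')) z (dir z i)) y (dir y j)) / 2
    ∀ x y : E,
      (Xx x y ⬝ᵥ Xx x y = Xy x y ⬝ᵥ Xy x y) ∧
      (X2x x y = X2y x y) ∧
      (Xx x y = 0 ↔ x.1 = y.1) ∧
      (Xy x y = 0 ↔ x.1 = y.1) ∧
      (X2x x y = 0 ↔ x.1 = y.1) := by
  open StepTwoCarnot in
  · intro x y
    let fx := fun x' => quarticGauge (mul B (-x') y)
    let fy := fun y' => quarticGauge (mul B (-x) y')
    show horizontalGrad B fx x ⬝ᵥ horizontalGrad B fx x =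
        horizontalGrad B fy y ⬝ᵥ horizontalGrad B fy y ∧
      horizontalHessian B fx x = horizontalHessian B fy y ∧
      (horizontalGrad B fx x = 0 ↔ x.1 = y.1) ∧ (horizontalGrad B fy y = 0 ↔ x.1 = y.1) ∧
      (horizontalHessian B fx x = 0 ↔ x.1 = y.1)
    simp only [fx, fy]
    rw [horizontalGrad_quarticGauge_neg_mul_in_fst B hB,
      horizontalGrad_comp_mul_left B _ _ (differentiable_quarticGauge _),
      horizontalHessian_quarticGauge_neg_mul_in_fst B hB,
      horizontalHessian_quarticGauge_neg_mul_in_snd B hB,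
      horizontalGrad_quarticGauge_eq_zero_iff B hB, horizontalGrad_quarticGauge_eq_zero_iff B hB,
      quarticGaugeHessian_eq_zero_iff B hB, Prod.fst_neg, neg_eq_zero, neg_mul_fst_eq_zero_iff]
    exact ⟨dotProduct_self_horizontalGrad_quarticGauge_neg B hB _, rfl, .rfl, .rfl, .rfl⟩
end

section
/- Let B skew-symmetric with B² = −I on ℝ^m, and v(x,t) = ct − (|x_h|^4 + 4x_v²)^{1/2} + r. Then at points with x_h ≠ 0, v_t − tr[X²v − (X²v Xv ⊗ Xv)/|Xv|²] = c + 2n|x_h|²/(|x_h|^4 + 4x_v²)^{1/2} ≥ c + 2n·|x_h|²/G^{1/2}; since |x_h|² ≤ G(x)^{1/2}, this quantity is ≤ c + 2n, so v satisfies the subsolution inequality v_t − tr[…] ≤ 0 at all points with x_h ≠ 0 whenever c ≤ −2n. -/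
/-!
Write `v = ψ ∘ G` with `ψ s = c t - √s + r`. By the chain rule, `Xv = ψ'(G) XG` and
`X²v = ψ'(G) X²G + ψ''(G) XG ⊗ XG`; the `ψ''` term is rank one along `XG` and is projected out,
so `tr[X²v - (X²v Xv ⊗ Xv)/|Xv|²] = ψ'(G) tr[X²G - (X²G XG ⊗ XG)/|XG|²]` with
`ψ'(G) = -1/(2√G)`. For the polynomial `G` one finds `XG = 4|x_h|² x_h + 8 x_v B x_h` and
`X²G = 8 x_h ⊗ x_h + 4|x_h|² I + 8 B x_h ⊗ B x_h` (the term `8 x_v B` is skew and vanishes on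
symmetrising); as `x_h ⊥ B x_h` and `|B x_h| = |x_h|`, the last trace is `4n|x_h|²`.
-/

open Matrix Filter Topology

section DotProduct

variable {𝕜 E ι : Type*} [NontriviallyNormedField 𝕜] [NormedAddCommGroup E] [NormedSpace 𝕜 E]
  [Fintype ι]

@[fun_prop]
theorem DifferentiableAt.dotProduct {f g : E → ι → 𝕜} {x : E} (hf : DifferentiableAt 𝕜 f x)
    (hg : DifferentiableAt 𝕜 g x) : DifferentiableAt 𝕜 (fun z => f z ⬝ᵥ g z) x := by
  unfold _root_.dotProduct
  fun_prop

theorem fderiv_dotProduct {f g : E → ι → 𝕜} {x : E} (hf : DifferentiableAt 𝕜 f x)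
    (hg : DifferentiableAt 𝕜 g x) (h : E) :
    fderiv 𝕜 (fun z => f z ⬝ᵥ g z) x h = fderiv 𝕜 f x h ⬝ᵥ g x + f x ⬝ᵥ fderiv 𝕜 g x h := by
  have hi : ∀ i ∈ Finset.univ, HasFDerivAt (fun z => f z i * g z i)
      (f x i • (ContinuousLinearMap.proj i).comp (fderiv 𝕜 g x) +
        g x i • (ContinuousLinearMap.proj i).comp (fderiv 𝕜 f x)) x := fun i _ =>
    (hasFDerivAt_pi'.1 hf.hasFDerivAt i).mul (hasFDerivAt_pi'.1 hg.hasFDerivAt i)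
  rw [show (fun z => f z ⬝ᵥ g z) = fun z => ∑ i, f z i * g z i from rfl,
    (HasFDerivAt.fun_sum hi).fderiv]
  simp [dotProduct, Finset.sum_add_distrib, mul_comm, add_comm]

end DotProduct

theorem dotProduct_self_pos {ι : Type*} [Fintype ι] {v : ι → ℝ} (hv : v ≠ 0) : 0 < v ⬝ᵥ v := by
  simpa using dotProduct_star_self_pos_iff.mpr hv

section SkewMatrix

variable {R ι : Type*} [CommRing R] [Fintype ι] {B : Matrix ι ι R}

theorem dotProduct_mulVec_self_eq_zero [NoZeroDivisors R] [CharZero R] (hB : Bᵀ = -B)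
    (v : ι → R) : v ⬝ᵥ (B *ᵥ v) = 0 := by
  rw [← self_eq_neg]
  conv_lhs => rw [dotProduct_mulVec, ← mulVec_transpose, hB, neg_mulVec, neg_dotProduct,
    dotProduct_comm]

theorem mulVec_dotProduct_self_eq_zero [NoZeroDivisors R] [CharZero R] (hB : Bᵀ = -B)
    (v : ι → R) : (B *ᵥ v) ⬝ᵥ v = 0 := by
  rw [dotProduct_comm, dotProduct_mulVec_self_eq_zero hB]

theorem transpose_mul_self_eq_one_of_skew [DecidableEq ι] (hB : Bᵀ = -B) (hBo : B * B = -1) :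
    Bᵀ * B = 1 := by
  rw [hB, neg_mul, hBo, neg_neg]

theorem mulVec_dotProduct_mulVec_self [DecidableEq ι] (hB : Bᵀ * B = 1) (v : ι → R) :
    (B *ᵥ v) ⬝ᵥ (B *ᵥ v) = v ⬝ᵥ v := by
  rw [dotProduct_mulVec, ← mulVec_transpose, mulVec_mulVec, hB, one_mulVec]

end SkewMatrix

section MCFTrace

variable {K ι : Type*} [Field K] [Fintype ι]

def mcfTrace (H : Matrix ι ι K) (p : ι → K) : K :=
  (H - (p ⬝ᵥ p)⁻¹ • vecMulVec (H *ᵥ p) p).trace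

theorem mcfTrace_eq (H : Matrix ι ι K) (p : ι → K) :
    mcfTrace H p = H.trace - (H *ᵥ p) ⬝ᵥ p / (p ⬝ᵥ p) := by
  rw [mcfTrace, trace_sub, trace_smul, trace_vecMulVec, smul_eq_mul, div_eq_inv_mul]

theorem mcfTrace_smul_add_smul_vecMulVec (H : Matrix ι ι K) {p : ι → K} (hp : p ⬝ᵥ p ≠ 0)
    (a b : K) {k : K} (hk : k ≠ 0) :
    mcfTrace (a • H + b • vecMulVec p p) (k • p) = a * mcfTrace H p := by
  simp only [mcfTrace_eq, trace_add, trace_smul, trace_vecMulVec, add_mulVec, smul_mulVec,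
    vecMulVec_mulVec, mulVec_smul, add_dotProduct, smul_dotProduct, dotProduct_smul,
    smul_eq_mul, op_smul_eq_smul]
  field_simp
  ring

end MCFTrace

noncomputable section HorizontalDerivatives

variable {E ι : Type*} [NormedAddCommGroup E] [NormedSpace ℝ E]

def horizontalGradient (X : E → ι → E) (f : E → ℝ) (x : E) : ι → ℝ :=
  fun j => fderiv ℝ f x (X x j)

def horizontalHessian (X : E → ι → E) (f : E → ℝ) (x : E) : Matrix ι ι ℝ :=
  of fun i j => (fderiv ℝ (fun z => horizontalGradient X f z j) x (X x i) +
    fderiv ℝ (fun z => horizontalGradient X f z i) x (X x j)) / 2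

variable {X : E → ι → E} {f : E → ℝ} {x : E} {ψ ψ' : ℝ → ℝ}

theorem horizontalGradient_comp (hψ : HasDerivAt ψ (ψ' (f x)) (f x))
    (hf : DifferentiableAt ℝ f x) :
    horizontalGradient X (ψ ∘ f) x = ψ' (f x) • horizontalGradient X f x := by
  ext j
  simp [horizontalGradient, (hψ.comp_hasFDerivAt x hf.hasFDerivAt).fderiv]

theorem horizontalHessian_comp (hψ : ∀ᶠ z in 𝓝 x, HasDerivAt ψ (ψ' (f z)) (f z))
    (hψ' : DifferentiableAt ℝ ψ' (f x)) (hf : ∀ᶠ z in 𝓝 x, DifferentiableAt ℝ f z)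
    (hgrad : ∀ j, DifferentiableAt ℝ (fun z => horizontalGradient X f z j) x) :
    horizontalHessian X (ψ ∘ f) x = ψ' (f x) • horizontalHessian X f x +
      deriv ψ' (f x) • vecMulVec (horizontalGradient X f x) (horizontalGradient X f x) := by
  have hgrad_comp : ∀ j, (fun z => horizontalGradient X (ψ ∘ f) z j) =ᶠ[𝓝 x]
      fun z => ψ' (f z) * horizontalGradient X f z j := fun j => by
    filter_upwards [hψ, hf] with z hψz hfz
    rw [horizontalGradient_comp hψz hfz, Pi.smul_apply, smul_eq_mul]
  have hψ'f : HasFDerivAt (fun z => ψ' (f z)) (deriv ψ' (f x) • fderiv ℝ f x) x :=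
    hψ'.hasDerivAt.comp_hasFDerivAt x hf.self_of_nhds.hasFDerivAt
  have hXX : ∀ i j, fderiv ℝ (fun z => horizontalGradient X (ψ ∘ f) z j) x (X x i) =
      ψ' (f x) * fderiv ℝ (fun z => horizontalGradient X f z j) x (X x i) +
        deriv ψ' (f x) * horizontalGradient X f x i * horizontalGradient X f x j := by
    intro i j
    rw [(hgrad_comp j).fderiv_eq, fderiv_fun_mul hψ'f.differentiableAt (hgrad j), hψ'f.fderiv]
    simp only [_root_.add_apply, _root_.smul_apply, smul_eq_mul, horizontalGradient]
    ring
  ext i j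
  simp only [horizontalHessian, of_apply, hXX, Matrix.add_apply, Matrix.smul_apply,
    vecMulVec_apply, smul_eq_mul]
  ring

theorem mcfTrace_horizontalHessian_comp [Fintype ι]
    (hψ : ∀ᶠ z in 𝓝 x, HasDerivAt ψ (ψ' (f z)) (f z))
    (hψ' : DifferentiableAt ℝ ψ' (f x)) (hψ'0 : ψ' (f x) ≠ 0)
    (hf : ∀ᶠ z in 𝓝 x, DifferentiableAt ℝ f z)
    (hgrad : ∀ j, DifferentiableAt ℝ (fun z => horizontalGradient X f z j) x)
    (hp : horizontalGradient X f x ⬝ᵥ horizontalGradient X f x ≠ 0) :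
    mcfTrace (horizontalHessian X (ψ ∘ f) x) (horizontalGradient X (ψ ∘ f) x) =
      ψ' (f x) * mcfTrace (horizontalHessian X f x) (horizontalGradient X f x) := by
  rw [horizontalHessian_comp hψ hψ' hf hgrad,
    horizontalGradient_comp hψ.self_of_nhds hf.self_of_nhds]
  exact mcfTrace_smul_add_smul_vecMulVec _ hp _ _ hψ'0

end HorizontalDerivatives

namespace HeisenbergType

variable {m : ℕ}

def frame (B : Matrix (Fin m) (Fin m) ℝ) (z : (Fin m → ℝ) × ℝ) (j : Fin m) :
    (Fin m → ℝ) × ℝ :=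
  (Pi.single j 1, (B *ᵥ z.1) j)

def gaugePow4 (z : (Fin m → ℝ) × ℝ) : ℝ := (z.1 ⬝ᵥ z.1) ^ 2 + 4 * z.2 ^ 2

theorem differentiable_gaugePow4 : Differentiable ℝ (gaugePow4 (m := m)) := fun _ => by
  unfold gaugePow4
  fun_prop

theorem fderiv_gaugePow4 (x h : (Fin m → ℝ) × ℝ) :
    fderiv ℝ gaugePow4 x h = 4 * (x.1 ⬝ᵥ x.1) * (x.1 ⬝ᵥ h.1) + 8 * x.2 * h.2 := by
  unfold gaugePow4
  simp (disch := fun_prop) only [fderiv_fun_add, fderiv_fun_pow, fderiv_const_mul,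
    fderiv_dotProduct, fderiv_fst, fderiv_snd, _root_.add_apply, _root_.smul_apply,
    ContinuousLinearMap.coe_fst', ContinuousLinearMap.coe_snd', nsmul_eq_mul, smul_eq_mul]
  rw [dotProduct_comm h.1]
  ring

variable (B : Matrix (Fin m) (Fin m) ℝ)

theorem horizontalGradient_gaugePow4_apply (x : (Fin m → ℝ) × ℝ) (j : Fin m) :
    horizontalGradient (frame B) gaugePow4 x j =
      4 * (x.1 ⬝ᵥ x.1) * x.1 j + 8 * x.2 * (B *ᵥ x.1) j := by
  simp [horizontalGradient, frame, fderiv_gaugePow4, dotProduct_single]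

theorem horizontalGradient_gaugePow4 (x : (Fin m → ℝ) × ℝ) :
    horizontalGradient (frame B) gaugePow4 x =
      (4 * (x.1 ⬝ᵥ x.1)) • x.1 + (8 * x.2) • (B *ᵥ x.1) := by
  ext j
  simp [horizontalGradient_gaugePow4_apply]

theorem differentiableAt_horizontalGradient_gaugePow4 (x : (Fin m → ℝ) × ℝ) (j : Fin m) :
    DifferentiableAt ℝ (fun z => horizontalGradient (frame B) gaugePow4 z j) x := by
  simp_rw [horizontalGradient_gaugePow4_apply, mulVec]
  fun_prop

theorem fderiv_horizontalGradient_gaugePow4 (x h : (Fin m → ℝ) × ℝ) (j : Fin m) :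
    fderiv ℝ (fun z => horizontalGradient (frame B) gaugePow4 z j) x h =
      8 * (x.1 ⬝ᵥ h.1) * x.1 j + 4 * (x.1 ⬝ᵥ x.1) * h.1 j + 8 * h.2 * (B *ᵥ x.1) j +
        8 * x.2 * (B *ᵥ h.1) j := by
  simp_rw [horizontalGradient_gaugePow4_apply, mulVec]
  simp (disch := fun_prop) only [fderiv_fun_add, fderiv_fun_mul, fderiv_apply, fderiv_fst,
    fderiv_snd, fderiv_fun_const, fderiv_dotProduct, ContinuousLinearMap.comp_apply,
    ContinuousLinearMap.coe_fst', ContinuousLinearMap.coe_snd', ContinuousLinearMap.proj_apply,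
    _root_.add_apply, _root_.smul_apply, _root_.zero_apply, Pi.zero_apply,
    ContinuousLinearMap.comp_zero, zero_dotProduct, smul_eq_mul]
  rw [dotProduct_comm h.1]
  ring

theorem horizontalHessian_gaugePow4 (hB : Bᵀ = -B) (x : (Fin m → ℝ) × ℝ) :
    horizontalHessian (frame B) gaugePow4 x = (8 : ℝ) • vecMulVec x.1 x.1 +
      (4 * (x.1 ⬝ᵥ x.1)) • (1 : Matrix (Fin m) (Fin m) ℝ) +
        (8 : ℝ) • vecMulVec (B *ᵥ x.1) (B *ᵥ x.1) := by
  have hskew : ∀ i j, B j i = -B i j := fun i j => by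
    rw [← transpose_apply B i j, hB, neg_apply]
  ext i j
  simp only [horizontalHessian, frame, fderiv_horizontalGradient_gaugePow4, dotProduct_single,
    mulVec_single_one, col_apply, hskew i j, of_apply, Matrix.add_apply, Matrix.smul_apply,
    vecMulVec_apply, one_apply, Pi.single_apply, smul_eq_mul]
  rcases eq_or_ne i j with rfl | hij
  · simp only [if_true]
    ring
  · simp only [hij, hij.symm, if_false]
    ring

theorem gaugePow4_pos {x : (Fin m → ℝ) × ℝ} (hx : x.1 ≠ 0) : 0 < gaugePow4 x := by
  have hρ := dotProduct_self_pos hx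
  unfold gaugePow4
  positivity

theorem dotProduct_self_div_sqrt_gaugePow4_le_one (x : (Fin m → ℝ) × ℝ) :
    x.1 ⬝ᵥ x.1 / √(gaugePow4 x) ≤ 1 :=
  div_le_one_of_le₀ (Real.le_sqrt_of_sq_le (le_add_of_nonneg_right (by positivity)))
    (Real.sqrt_nonneg _)

variable {B} (hB : Bᵀ = -B) (hBo : B * B = -1)
include hB hBo

theorem horizontalGradient_gaugePow4_dotProduct_self (x : (Fin m → ℝ) × ℝ) :
    horizontalGradient (frame B) gaugePow4 x ⬝ᵥ horizontalGradient (frame B) gaugePow4 x =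
      16 * (x.1 ⬝ᵥ x.1) * gaugePow4 x := by
  simp only [horizontalGradient_gaugePow4, dotProduct_add, dotProduct_smul, add_dotProduct,
    smul_dotProduct, smul_eq_mul, dotProduct_mulVec_self_eq_zero hB,
    mulVec_dotProduct_self_eq_zero hB,
    mulVec_dotProduct_mulVec_self (transpose_mul_self_eq_one_of_skew hB hBo), gaugePow4]
  ring

theorem mcfTrace_horizontalHessian_gaugePow4 {x : (Fin m → ℝ) × ℝ} (hx : x.1 ≠ 0) :
    mcfTrace (horizontalHessian (frame B) gaugePow4 x)
      (horizontalGradient (frame B) gaugePow4 x) = 4 * (m + 1) * (x.1 ⬝ᵥ x.1) := by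
  have hρ := (dotProduct_self_pos hx).ne'
  have hG := (gaugePow4_pos hx).ne'
  rw [mcfTrace_eq, horizontalGradient_gaugePow4_dotProduct_self hB hBo,
    horizontalHessian_gaugePow4 B hB, horizontalGradient_gaugePow4]
  simp only [trace_add, trace_smul, trace_vecMulVec, trace_one, Fintype.card_fin, add_mulVec,
    smul_mulVec, one_mulVec, vecMulVec_mulVec, op_smul_eq_smul, dotProduct_add, add_dotProduct,
    dotProduct_smul, smul_dotProduct, smul_add, smul_eq_mul, dotProduct_mulVec_self_eq_zero hB,
    mulVec_dotProduct_self_eq_zero hB,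
    mulVec_dotProduct_mulVec_self (transpose_mul_self_eq_one_of_skew hB hBo), mul_zero,
    add_zero, zero_add]
  unfold gaugePow4 at *
  field_simp
  ring

theorem mcfTrace_horizontalHessian_sqrt_gaugePow4 {x : (Fin m → ℝ) × ℝ} (hx : x.1 ≠ 0)
    (a b : ℝ) :
    mcfTrace (horizontalHessian (frame B) ((fun s => a - √s + b) ∘ gaugePow4) x)
      (horizontalGradient (frame B) ((fun s => a - √s + b) ∘ gaugePow4) x) =
        -(2 * (m + 1) * (x.1 ⬝ᵥ x.1) / √(gaugePow4 x)) := by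
  have hρ := dotProduct_self_pos hx
  have hG := gaugePow4_pos hx
  have hψ : ∀ᶠ z in 𝓝 x, HasDerivAt (fun s => a - √s + b) (-(1 / (2 * √(gaugePow4 z))))
      (gaugePow4 z) := by
    filter_upwards [differentiable_gaugePow4.continuous.continuousAt.eventually (lt_mem_nhds hG)]
      with z hz
    exact ((Real.hasDerivAt_sqrt hz.ne').const_sub a).add_const b
  have hψ' : DifferentiableAt ℝ (fun s => -(1 / (2 * √s))) (gaugePow4 x) := by
    fun_prop (disch := positivity)
  have hp : horizontalGradient (frame B) gaugePow4 x ⬝ᵥ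
      horizontalGradient (frame B) gaugePow4 x ≠ 0 := by
    rw [horizontalGradient_gaugePow4_dotProduct_self hB hBo]
    positivity
  rw [mcfTrace_horizontalHessian_comp hψ hψ' (by simpa using (Real.sqrt_pos.2 hG).ne')
    (.of_forall differentiable_gaugePow4) (differentiableAt_horizontalGradient_gaugePow4 B x)
    hp, mcfTrace_horizontalHessian_gaugePow4 hB hBo hx]
  field_simp
  ring

end HeisenbergType

open HeisenbergType in
theorem gauge_sqrt_global_subsolution_of_horizontal_mcf_general
    (m : ℕ) (B : Matrix (Fin m) (Fin m) ℝ)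
    (hB : Bᵀ = -B) (hBo : B * B = -1) (c r t : ℝ) :
    letI E := (Fin m → ℝ) × ℝ
    letI dir : E → Fin m → E := fun y j => (Pi.single j 1, (B *ᵥ y.1) j)
    letI G : E → ℝ := fun x => (x.1 ⬝ᵥ x.1) ^ 2 + 4 * x.2 ^ 2
    letI v : E → ℝ := fun x => c * t - Real.sqrt (G x) + r
    letI Xv : E → Fin m → ℝ := fun x j => fderiv ℝ v x (dir x j)
    letI X2v : E → Matrix (Fin m) (Fin m) ℝ := fun x => Matrix.of fun i j =>
      (fderiv ℝ (fun z => fderiv ℝ v z (dir z j)) x (dir x i) +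
        fderiv ℝ (fun z => fderiv ℝ v z (dir z i)) x (dir x j)) / 2
    ∀ x : E, x.1 ≠ 0 →
      (c - (X2v x - (Xv x ⬝ᵥ Xv x)⁻¹ • vecMulVec (X2v x *ᵥ Xv x) (Xv x)).trace
          = c + 2 * (m + 1) * (x.1 ⬝ᵥ x.1) / Real.sqrt (G x)) ∧
      (c + 2 * (m + 1) * (x.1 ⬝ᵥ x.1) / Real.sqrt (G x) ≤ c + 2 * (m + 1)) ∧
      (c ≤ -(2 * (m + 1)) →
        c - (X2v x - (Xv x ⬝ᵥ Xv x)⁻¹ • vecMulVec (X2v x *ᵥ Xv x) (Xv x)).trace ≤ 0) := by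
  intro x hx
  -- `Xv x` and `X2v x` unfold to the horizontal gradient and Hessian of
  -- `(fun s => c * t - √s + r) ∘ gaugePow4` along `frame B`.
  have key : c - mcfTrace (horizontalHessian (frame B) ((fun s => c * t - √s + r) ∘ gaugePow4) x)
      (horizontalGradient (frame B) ((fun s => c * t - √s + r) ∘ gaugePow4) x) =
        c + 2 * (m + 1) * (x.1 ⬝ᵥ x.1) / √(gaugePow4 x) := by
    rw [mcfTrace_horizontalHessian_sqrt_gaugePow4 hB hBo hx, sub_neg_eq_add]
  have hbound : c + 2 * (m + 1) * (x.1 ⬝ᵥ x.1) / √(gaugePow4 x) ≤ c + 2 * (m + 1) := by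
    rw [mul_div_assoc]
    exact (add_le_add_iff_left c).2
      (mul_le_of_le_one_right (by positivity) (dotProduct_self_div_sqrt_gaugePow4_le_one x))
  exact ⟨key, hbound, fun hc => key.trans_le (by linarith)⟩

/-- For `v(x,t) = ct − (|x_h|⁴ + 4x_v²)^{1/2} + r` on a Heisenberg-type step-two Carnot
group (`B` skew-symmetric with `B² = −I`, `n = m + 1`), at points with `x_h ≠ 0`:
`v_t − tr[X²v − (X²v Xv ⊗ Xv)/|Xv|²] = c + 2n|x_h|²/√G(x)`, this quantity is
`≤ c + 2n` since `|x_h|² ≤ √G(x)`, and hence the subsolution inequality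
`v_t − tr[…] ≤ 0` holds at all such points whenever `c ≤ −2n`.
Horizontal derivatives are taken along the generators `X_j = ∂_{x_j} + (B x_h)_j ∂_v`. -/
theorem gauge_sqrt_global_subsolution_of_horizontal_mcf
    (m : ℕ) (hm : 2 ≤ m) (B : Matrix (Fin m) (Fin m) ℝ)
    (hB : Bᵀ = -B) (hBo : B * B = -1) (c r t : ℝ) :
    letI E := (Fin m → ℝ) × ℝ
    letI dir : E → Fin m → E := fun y j => (Pi.single j 1, (B *ᵥ y.1) j)
    letI G : E → ℝ := fun x => (x.1 ⬝ᵥ x.1) ^ 2 + 4 * x.2 ^ 2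
    letI v : E → ℝ := fun x => c * t - Real.sqrt (G x) + r
    letI Xv : E → Fin m → ℝ := fun x j => fderiv ℝ v x (dir x j)
    letI X2v : E → Matrix (Fin m) (Fin m) ℝ := fun x => Matrix.of fun i j =>
      (fderiv ℝ (fun z => fderiv ℝ v z (dir z j)) x (dir x i) +
        fderiv ℝ (fun z => fderiv ℝ v z (dir z i)) x (dir x j)) / 2
    ∀ x : E, x.1 ≠ 0 →
      (c - (X2v x - (Xv x ⬝ᵥ Xv x)⁻¹ • vecMulVec (X2v x *ᵥ Xv x) (Xv x)).trace
          = c + 2 * (m + 1) * (x.1 ⬝ᵥ x.1) / Real.sqrt (G x)) ∧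
      (c + 2 * (m + 1) * (x.1 ⬝ᵥ x.1) / Real.sqrt (G x) ≤ c + 2 * (m + 1)) ∧
      (c ≤ -(2 * (m + 1)) →
        c - (X2v x - (Xv x ⬝ᵥ Xv x)⁻¹ • vecMulVec (X2v x *ᵥ Xv x) (Xv x)).trace ≤ 0) :=
  gauge_sqrt_global_subsolution_of_horizontal_mcf_general m B hB hBo c r t
end
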